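/- Let F = ⟨f_1,…,f_r⟩ be a flip sequence transforming T_0 into T_r, and let π(F) be a permutation of the flips of F that is a topological sort of the DAG D_F (so π(F) is itself a valid flip sequence transforming T_0 into T_r). Then the DAG D_{π(F)}, defined from the sequence π(F), is equal (as a directed graph on the same set of flips) to D_F. -/

import Mathlib

open Finset

/-- Two vertices of the convex `m`-gon are adjacent in the cyclic order. -/
def PolyAdj (m : ℕ) (a b : Fin m) : Prop :=
  (a.val + 1) % m = b.val ∨ (b.val + 1) % m = a.val

/-- `e` is a diagonal of the convex `m`-gon: an unordered pair of distinct,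
non-adjacent vertices. -/
def IsDiagonal (m : ℕ) (e : Finset (Fin m)) : Prop :=
  ∃ a b : Fin m, a ≠ b ∧ ¬ PolyAdj m a b ∧ e = {a, b}

/-- The cyclic distance from `a` to `x`, going forwards in the cyclic order. -/
def cycDist (m : ℕ) (a x : Fin m) : ℕ := (x.val + m - a.val) % m

/-- `x` lies strictly between `a` and `b` in the cyclic order. -/
def CycBtw (m : ℕ) (a x b : Fin m) : Prop :=
  0 < cycDist m a x ∧ cycDist m a x < cycDist m a b

/-- Two chords cross: their endpoints strictly interleave in the cyclic order. -/
def Cross (m : ℕ) (e₁ e₂ : Finset (Fin m)) : Prop :=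
  ∃ a b c d : Fin m, e₁ = {a, b} ∧ e₂ = {c, d} ∧ CycBtw m a c b ∧ CycBtw m b d a

/-- A triangulation of the convex `m`-gon: a maximal set of pairwise
non-crossing diagonals. -/
structure Triangulation (m : ℕ) where
  diagonals : Finset (Finset (Fin m))
  isDiagonal : ∀ e ∈ diagonals, IsDiagonal m e
  noncross : ∀ e₁ ∈ diagonals, ∀ e₂ ∈ diagonals, ¬ Cross m e₁ e₂
  maximal : ∀ e, IsDiagonal m e → (∀ e' ∈ diagonals, ¬ Cross m e e') → e ∈ diagonals

/-- `e` is a side in the triangulation `T`: either an edge of the polygon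
(between cyclically adjacent vertices) or a diagonal of `T`. -/
def IsSide (m : ℕ) (T : Triangulation m) (e : Finset (Fin m)) : Prop :=
  (∃ a b : Fin m, PolyAdj m a b ∧ e = {a, b}) ∨ e ∈ T.diagonals

/-- `t` is a triangle of the triangulation `T`: three distinct vertices each
pair of which forms a side of `T`. -/
def IsTriangle (m : ℕ) (T : Triangulation m) (t : Finset (Fin m)) : Prop :=
  ∃ a b c : Fin m, a ≠ b ∧ a ≠ c ∧ b ≠ c ∧ t = {a, b, c} ∧
    IsSide m T {a, b} ∧ IsSide m T {a, c} ∧ IsSide m T {b, c}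

/-- Two diagonals of `T` are neighbors if they both belong to `T` and lie on a
common triangle of `T`; they are independent otherwise. -/
def Neighbor (m : ℕ) (T : Triangulation m) (e₁ e₂ : Finset (Fin m)) : Prop :=
  e₁ ∈ T.diagonals ∧ e₂ ∈ T.diagonals ∧
    ∃ t, IsTriangle m T t ∧ e₁ ⊆ t ∧ e₂ ⊆ t

/-- `T'` is obtained from `T` by flipping the diagonal `e`, which removes `e`
and creates the new diagonal `e'` (necessarily the opposite diagonal of the
quadrilateral formed by the two triangles of `T` containing `e`, since `T'` is
again a triangulation). -/
def IsFlip (m : ℕ) (T T' : Triangulation m) (e e' : Finset (Fin m)) : Prop :=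
  e ∈ T.diagonals ∧ e' ∉ T.diagonals ∧
    T'.diagonals = insert e' (T.diagonals.erase e)

/-- `Ts 0, Ts 1, …, Ts r` is a sequence of triangulations in which `Ts (i+1)`
is obtained from `Ts i` by performing the flip `F i`, which removes the
diagonal `(F i).1` and creates the diagonal `(F i).2`. -/
def IsFlipSeq (m r : ℕ) (F : ℕ → Finset (Fin m) × Finset (Fin m))
    (Ts : ℕ → Triangulation m) : Prop :=
  ∀ i < r, IsFlip m (Ts i) (Ts (i + 1)) (F i).1 (F i).2

/-- The flip distance between two triangulations: the minimum length of a flip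
sequence transforming one into the other. -/
noncomputable def FlipDist (m : ℕ) (T T' : Triangulation m) : ℕ :=
  sInf {r | ∃ F Ts, IsFlipSeq m r F Ts ∧ Ts 0 = T ∧ Ts r = T'}

/-- `e` is a free-diagonal of `T` with respect to `Tfinal`: flipping `e` in `T`
creates a diagonal belonging to `Tfinal`. -/
def FreeDiagonal (m : ℕ) (T Tfinal : Triangulation m) (e : Finset (Fin m)) : Prop :=
  ∃ T' e', IsFlip m T T' e e' ∧ e' ∈ Tfinal.diagonals

/-- Arc of the DAG `D_F` associated to the flip sequence `F` with triangulation
sequence `Ts`: there is an arc from flip `i` to flip `j` when `i < j` and the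
diagonal created by flip `i` is a neighbor of the diagonal removed by flip `j`
in the triangulation `Ts j` in which flip `j` is performed. -/
def Arc (m r : ℕ) (F : ℕ → Finset (Fin m) × Finset (Fin m))
    (Ts : ℕ → Triangulation m) (i j : ℕ) : Prop :=
  i < j ∧ j < r ∧ Neighbor m (Ts j) (F i).2 (F j).1

/-!
Two flips that remove the same diagonal `e` and create the same diagonal `e'` see the same
neighbors of `e`, because the two triangles on `e` are the halves of the quadrilateral `e ∪ e'`.
Hence an arc of `D_{π(F)}` is an arc of `D_F` as soon as its two flips occur in the same order
in `F`, and conversely every arc of `D_F` is respected by the topological sort `π(F)`.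

What remains is that if the diagonal `d` created by flip `i` is a neighbor of the diagonal
removed by an earlier flip `j`, then `j` precedes `i` in `π(F)`. From time `j + 1` on, `d` is
either present and a neighbor of a diagonal created by a flip not before `j` in `π(F)`, or
absent and crossed by such a diagonal (`Tracks`). Every flip preserves this, and a flip that
removes or creates `d` removes a neighbor of such a created diagonal, so it receives an
arc and comes after `j`; in particular flip `i` does.
-/

lemma Finset.pair_eq_pair_iff {α : Type*} [DecidableEq α] {a b c d : α} :
    ({a, b} : Finset α) = {c, d} ↔ (a = c ∧ b = d) ∨ (a = d ∧ b = c) := by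
  constructor
  · intro h
    have ha : a ∈ ({c, d} : Finset α) := h ▸ mem_insert_self a {b}
    have hb : b ∈ ({c, d} : Finset α) := h ▸ mem_insert_of_mem (mem_singleton_self b)
    have hc : c ∈ ({a, b} : Finset α) := h ▸ mem_insert_self c {d}
    have hd : d ∈ ({a, b} : Finset α) := h ▸ mem_insert_of_mem (mem_singleton_self d)
    simp only [mem_insert, mem_singleton] at ha hb hc hd
    grind
  · rintro (⟨rfl, rfl⟩ | ⟨rfl, rfl⟩)
    · rfl
    · exact pair_comm a b

section CyclicOrder

variable {m : ℕ}

lemma cycDist_eq (a x : Fin m) :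
    cycDist m a x = if a.val ≤ x.val then x.val - a.val else x.val + m - a.val := by
  unfold cycDist
  split_ifs with h
  · rw [show x.val + m - a.val = x.val - a.val + m by omega, Nat.add_mod_right,
      Nat.mod_eq_of_lt (by omega)]
  · exact Nat.mod_eq_of_lt (by omega)

lemma cycBtw_iff {a x b : Fin m} : CycBtw m a x b ↔
    (a.val < x.val ∧ x.val < b.val) ∨ (x.val < b.val ∧ b.val < a.val) ∨
      (b.val < a.val ∧ a.val < x.val) := by
  have := a.isLt; have := x.isLt; have := b.isLt
  simp only [CycBtw, cycDist_eq]
  split_ifs <;> omega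

lemma polyAdj_iff {a b : Fin m} : PolyAdj m a b ↔
    b.val = a.val + 1 ∨ (a.val + 1 = m ∧ b.val = 0) ∨
      a.val = b.val + 1 ∨ (b.val + 1 = m ∧ a.val = 0) := by
  have := a.isLt; have := b.isLt
  have hmod : ∀ n < m, (n + 1) % m = if n + 1 = m then 0 else n + 1 := fun n hn => by
    split_ifs with h
    · rw [h, Nat.mod_self]
    · exact Nat.mod_eq_of_lt (by omega)
  rw [PolyAdj, hmod _ a.isLt, hmod _ b.isLt]
  split_ifs <;> omega

lemma CycBtw.ne {a x b : Fin m} (h : CycBtw m a x b) : x ≠ a ∧ x ≠ b ∧ a ≠ b := by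
  simp only [cycBtw_iff, ne_eq, Fin.ext_iff] at *
  omega

lemma cycBtw_or_cycBtw {a x b : Fin m} (hxa : x ≠ a) (hxb : x ≠ b) (hab : a ≠ b) :
    CycBtw m a x b ∨ CycBtw m b x a := by
  simp only [cycBtw_iff, ne_eq, Fin.ext_iff] at *
  omega

lemma Cross.exists_of_eq {e₁ e₂ : Finset (Fin m)} (h : Cross m e₁ e₂) {a b : Fin m}
    (he : e₁ = {a, b}) : ∃ c d : Fin m, e₂ = {c, d} ∧ CycBtw m a c b ∧ CycBtw m b d a := by
  obtain ⟨a', b', c, d, he₁, he₂, hc, hd⟩ := h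
  rcases Finset.pair_eq_pair_iff.1 (he.symm.trans he₁) with ⟨rfl, rfl⟩ | ⟨rfl, rfl⟩
  · exact ⟨c, d, he₂, hc, hd⟩
  · exact ⟨d, c, he₂.trans (pair_comm c d), hd, hc⟩

lemma Cross.symm {e₁ e₂ : Finset (Fin m)} (h : Cross m e₁ e₂) : Cross m e₂ e₁ := by
  obtain ⟨a, b, c, d, rfl, rfl, hc, hd⟩ := h
  refine ⟨c, d, b, a, rfl, pair_comm a b, ?_, ?_⟩ <;>
  · simp only [cycBtw_iff] at *
    omega

lemma not_cross_of_polyAdj {u v : Fin m} (huv : PolyAdj m u v) (d : Finset (Fin m)) :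
    ¬ Cross m {u, v} d := fun h => by
  obtain ⟨x, y, -, hx, hy⟩ := h.exists_of_eq rfl
  rw [polyAdj_iff] at huv
  rw [cycBtw_iff] at hx hy
  omega

lemma Cross.isDiagonal {e d : Finset (Fin m)} (h : Cross m e d) : IsDiagonal m e := by
  obtain ⟨a, b, x, y, rfl, hd, hx, hy⟩ := h
  exact ⟨a, b, hx.ne.2.2, fun hab => not_cross_of_polyAdj hab d ⟨a, b, x, y, rfl, hd, hx, hy⟩,
    rfl⟩

lemma cross_quad_side {a b u w x y : Fin m} (hu : CycBtw m a u b) (hw : CycBtw m b w a)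
    (hx : CycBtw m a x b) (hy : CycBtw m b y a) (hne : ¬ (x = u ∧ y = w)) :
    Cross m {a, u} {x, y} ∨ Cross m {b, u} {x, y} ∨ Cross m {b, w} {x, y} ∨
      Cross m {a, w} {x, y} := by
  have hyu : CycBtw m u y a ∧ CycBtw m b y u := by
    simp only [cycBtw_iff] at hu hy ⊢
    omega
  have hxw : CycBtw m w x b ∧ CycBtw m a x w := by
    simp only [cycBtw_iff] at hw hx ⊢
    omega
  by_cases hxu : CycBtw m a x u
  · exact Or.inl ⟨a, u, x, y, rfl, rfl, hxu, hyu.1⟩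
  by_cases hxb : CycBtw m u x b
  · exact Or.inr (Or.inl ⟨b, u, y, x, rfl, pair_comm x y, hyu.2, hxb⟩)
  by_cases hyw : CycBtw m b y w
  · exact Or.inr (Or.inr (Or.inl ⟨b, w, y, x, rfl, pair_comm x y, hyw, hxw.1⟩))
  by_cases hya : CycBtw m w y a
  · exact Or.inr (Or.inr (Or.inr ⟨a, w, x, y, rfl, rfl, hxw.2, hya⟩))
  refine absurd ⟨?_, ?_⟩ hne <;> rw [Fin.ext_iff]
  · simp only [cycBtw_iff] at hu hx hxu hxb
    omega
  · simp only [cycBtw_iff] at hw hy hyw hya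
    omega

end CyclicOrder

section Triangulation

variable {m : ℕ} {T : Triangulation m}

lemma Neighbor.symm {x y : Finset (Fin m)} (h : Neighbor m T x y) : Neighbor m T y x :=
  let ⟨hx, hy, t, ht, hxt, hyt⟩ := h
  ⟨hy, hx, t, ht, hyt, hxt⟩

lemma IsSide.not_cross {s s' : Finset (Fin m)} (hs : IsSide m T s) (hs' : IsSide m T s') :
    ¬ Cross m s s' := by
  rcases hs with ⟨u, v, huv, rfl⟩ | hs
  · exact not_cross_of_polyAdj huv s'
  rcases hs' with ⟨u, v, huv, rfl⟩ | hs'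
  · exact fun h => not_cross_of_polyAdj huv s h.symm
  exact T.noncross s hs s' hs'

lemma IsSide.mem_of_isDiagonal {s : Finset (Fin m)} (hs : IsSide m T s)
    (hd : IsDiagonal m s) : s ∈ T.diagonals := by
  rcases hs with ⟨u, v, huv, rfl⟩ | hs
  · obtain ⟨a, b, -, hab, he⟩ := hd
    rcases Finset.pair_eq_pair_iff.1 he with ⟨rfl, rfl⟩ | ⟨rfl, rfl⟩
    · exact absurd huv hab
    · exact absurd (Or.symm huv) hab
  · exact hs

lemma IsTriangle.card_eq {t : Finset (Fin m)} (ht : IsTriangle m T t) : t.card = 3 := by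
  obtain ⟨a, b, c, hab, hac, hbc, rfl, -⟩ := ht
  exact card_eq_three.2 ⟨a, b, c, hab, hac, hbc, rfl⟩

lemma IsTriangle.isSide {t : Finset (Fin m)} (ht : IsTriangle m T t) {x y : Fin m}
    (hx : x ∈ t) (hy : y ∈ t) (hxy : x ≠ y) : IsSide m T {x, y} := by
  obtain ⟨a, b, c, -, -, -, rfl, hab, hac, hbc⟩ := ht
  simp only [mem_insert, mem_singleton] at hx hy
  rcases hx with rfl | rfl | rfl <;> rcases hy with rfl | rfl | rfl <;>
    first
      | exact absurd rfl hxy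
      | assumption
      | (rw [pair_comm]; assumption)

lemma IsTriangle.mem_of_subset {t x : Finset (Fin m)} (ht : IsTriangle m T t)
    (hx : IsDiagonal m x) (hxt : x ⊆ t) : x ∈ T.diagonals := by
  obtain ⟨p, q, hpq, hadj, rfl⟩ := hx
  exact (ht.isSide (hxt (mem_insert_self p _)) (hxt (by simp)) hpq).mem_of_isDiagonal
    ⟨p, q, hpq, hadj, rfl⟩

lemma eq_of_isSide_of_cycBtw {a b v v' : Fin m} (hv : CycBtw m a v b) (hv' : CycBtw m a v' b)
    (hav : IsSide m T {a, v}) (hvb : IsSide m T {v, b}) (hav' : IsSide m T {a, v'})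
    (hv'b : IsSide m T {v', b}) : v = v' := by
  by_contra hne
  have : CycBtw m a v v' ∨ CycBtw m a v' v := by
    simp only [cycBtw_iff, Fin.ext_iff] at *
    omega
  rcases this with h | h
  · refine hav'.not_cross hvb ⟨a, v', v, b, rfl, rfl, h, ?_⟩
    simp only [cycBtw_iff] at *
    omega
  · refine hav.not_cross hv'b ⟨a, v, v', b, rfl, rfl, h, ?_⟩
    simp only [cycBtw_iff] at *
    omega

end Triangulation

namespace IsFlip

variable {m : ℕ} {T T' : Triangulation m} {e e' : Finset (Fin m)}

lemma symm (h : IsFlip m T T' e e') : IsFlip m T' T e' e := by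
  obtain ⟨he, he', hT'⟩ := h
  have hne : e ≠ e' := fun h => he' (h ▸ he)
  refine ⟨hT' ▸ mem_insert_self _ _, ?_, ?_⟩
  · simp [hT', hne]
  · rw [hT', erase_insert (fun h => he' (mem_erase.1 h).2), insert_erase he]

lemma mem_left (h : IsFlip m T T' e e') : e ∈ T.diagonals := h.1

lemma notMem_left (h : IsFlip m T T' e e') : e' ∉ T.diagonals := h.2.1

lemma mem_right (h : IsFlip m T T' e e') : e' ∈ T'.diagonals := h.symm.mem_left

lemma notMem_right (h : IsFlip m T T' e e') : e ∉ T'.diagonals := h.symm.notMem_left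

lemma mem_of_ne (h : IsFlip m T T' e e') {x : Finset (Fin m)} (hx : x ∈ T.diagonals)
    (hxe : x ≠ e) : x ∈ T'.diagonals := by
  rw [h.2.2]
  exact mem_insert_of_mem (mem_erase.2 ⟨hxe, hx⟩)

lemma isSide_of_ne (h : IsFlip m T T' e e') {s : Finset (Fin m)} (hs : IsSide m T s)
    (hse : s ≠ e) : IsSide m T' s :=
  hs.imp id fun hs => h.mem_of_ne hs hse

lemma eq_of_cross (h : IsFlip m T T' e e') {w : Finset (Fin m)} (hw : w ∈ T.diagonals)
    (hcr : Cross m w e') : w = e := by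
  by_contra hne
  exact T'.noncross w (h.mem_of_ne hw hne) e' h.mem_right hcr

lemma cross (h : IsFlip m T T' e e') : Cross m e e' := by
  by_contra hne
  refine h.notMem_right (T'.maximal e (T.isDiagonal e h.mem_left) fun g hg hcr => hne ?_)
  rwa [← h.symm.eq_of_cross hg hcr.symm]

lemma exists_quad (h : IsFlip m T T' e e') : ∃ a b u w : Fin m,
    e = {a, b} ∧ e' = {u, w} ∧ CycBtw m a u b ∧ CycBtw m b w a := by
  obtain ⟨a, b, -, -, he⟩ := T.isDiagonal e h.mem_left
  obtain ⟨u, w, he', hu, hw⟩ := h.cross.exists_of_eq he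
  exact ⟨a, b, u, w, he, he', hu, hw⟩

/-- A chord crossing `{a, u}` would cross `e` or `e'`, so by maximality `{a, u}` is a side
of `T'`, and hence of `T`. -/
lemma isSide_of_cycBtw (h : IsFlip m T T' e e') {a b u w : Fin m} (he : e = {a, b})
    (he' : e' = {u, w}) (hu : CycBtw m a u b) (hw : CycBtw m b w a) :
    IsSide m T {a, u} ∧ IsSide m T' {a, u} := by
  have hae' : ({a, u} : Finset (Fin m)) ≠ e' := by
    rw [he']
    intro hq
    rcases Finset.pair_eq_pair_iff.1 hq with ⟨h1, -⟩ | ⟨h1, -⟩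
    · exact hu.ne.1 h1.symm
    · exact hw.ne.2.1 h1.symm
  by_cases hadj : PolyAdj m a u
  · exact ⟨Or.inl ⟨a, u, hadj, rfl⟩, Or.inl ⟨a, u, hadj, rfl⟩⟩
  have hT' : ({a, u} : Finset (Fin m)) ∈ T'.diagonals := by
    refine T'.maximal _ ⟨a, u, hu.ne.1.symm, hadj, rfl⟩ fun g hg hcr => ?_
    obtain ⟨x, y, rfl, hx, hy⟩ := hcr.exists_of_eq rfl
    have hge' : ({x, y} : Finset (Fin m)) ≠ e' := by
      rw [he']
      intro hq
      have : u ∈ ({x, y} : Finset (Fin m)) := hq ▸ mem_insert_self u {w}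
      simp only [mem_insert, mem_singleton] at this
      rcases this with rfl | rfl
      · exact hx.ne.2.1 rfl
      · exact hy.ne.1 rfl
    have hgT : ({x, y} : Finset (Fin m)) ∈ T.diagonals := h.symm.mem_of_ne hg hge'
    by_cases hyb : CycBtw m b y a
    · refine T.noncross e h.mem_left _ hgT ⟨a, b, x, y, he, rfl, ?_, hyb⟩
      simp only [cycBtw_iff] at *
      omega
    · refine T'.noncross e' h.mem_right _ hg ⟨u, w, y, x, he', pair_comm x y, ?_, ?_⟩ <;>
      · simp only [cycBtw_iff] at *
        omega
  exact ⟨Or.inr (h.symm.mem_of_ne hT' hae'), Or.inr hT'⟩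

end IsFlip

namespace IsFlip

variable {m : ℕ} {T T' : Triangulation m} {e e' : Finset (Fin m)}

lemma isSide_quad (h : IsFlip m T T' e e') {a b u w : Fin m} (he : e = {a, b})
    (he' : e' = {u, w}) (hu : CycBtw m a u b) (hw : CycBtw m b w a) :
    IsSide m T {a, u} ∧ IsSide m T {u, b} ∧ IsSide m T {b, w} ∧ IsSide m T {w, a} := by
  have hbu : CycBtw m u b w := by
    simp only [cycBtw_iff] at *
    omega
  have hwa : CycBtw m w a u := by
    simp only [cycBtw_iff] at *
    omega
  exact ⟨(h.isSide_of_cycBtw he he' hu hw).1,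
    (h.symm.isSide_of_cycBtw he' (he.trans (pair_comm a b)) hbu hwa).2,
    (h.isSide_of_cycBtw (he.trans (pair_comm a b)) (he'.trans (pair_comm u w)) hw hu).1,
    (h.symm.isSide_of_cycBtw (he'.trans (pair_comm u w)) he hwa hbu).2⟩

lemma isTriangle_insert (h : IsFlip m T T' e e') {c : Fin m} (hc : c ∈ e') :
    IsTriangle m T (insert c e) := by
  obtain ⟨a, b, u, w, rfl, rfl, hu, hw⟩ := h.exists_quad
  obtain ⟨hau, hub, hbw, hwa⟩ := h.isSide_quad rfl rfl hu hw
  have hab : IsSide m T {a, b} := Or.inr h.mem_left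
  simp only [mem_insert, mem_singleton] at hc
  rcases hc with rfl | rfl
  · exact ⟨c, a, b, hu.ne.1, hu.ne.2.1, hu.ne.2.2, rfl, by rwa [pair_comm], hub, hab⟩
  · exact ⟨c, a, b, hw.ne.2.1, hw.ne.1, hw.ne.2.2.symm, rfl, hwa, by rwa [pair_comm], hab⟩

lemma subset_union_of_isTriangle (h : IsFlip m T T' e e') {t : Finset (Fin m)}
    (ht : IsTriangle m T t) (het : e ⊆ t) : t ⊆ e ∪ e' := by
  obtain ⟨a, b, u, w, rfl, rfl, hu, hw⟩ := h.exists_quad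
  obtain ⟨hau, hub, hbw, hwa⟩ := h.isSide_quad rfl rfl hu hw
  have hab := hu.ne.2.2
  have ha : a ∈ t := het (mem_insert_self a {b})
  have hb : b ∈ t := het (mem_insert_of_mem (mem_singleton_self b))
  obtain ⟨v, hvt, hv⟩ := exists_mem_notMem_of_card_lt_card
    (show ({a, b} : Finset (Fin m)).card < t.card by rw [card_pair hab, ht.card_eq]; omega)
  have hteq : insert v {a, b} = t := eq_of_subset_of_card_le (insert_subset hvt het)
    (by rw [ht.card_eq, card_insert_of_notMem hv, card_pair hab])
  simp only [mem_insert, mem_singleton, not_or] at hv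
  have hvuw : v = u ∨ v = w := by
    rcases cycBtw_or_cycBtw hv.1 hv.2 hab with hv' | hv'
    · exact Or.inl (eq_of_isSide_of_cycBtw hv' hu (ht.isSide ha hvt (Ne.symm hv.1))
        (ht.isSide hvt hb hv.2) hau hub)
    · exact Or.inr (eq_of_isSide_of_cycBtw hv' hw (ht.isSide hb hvt (Ne.symm hv.2))
        (ht.isSide hvt ha hv.1) hbw hwa)
  rw [← hteq]
  intro y
  simp only [mem_insert, mem_singleton, mem_union]
  grind

lemma neighbor_iff (h : IsFlip m T T' e e') {x : Finset (Fin m)} :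
    Neighbor m T x e ↔ IsDiagonal m x ∧ x ⊆ e ∪ e' ∧ x ≠ e' := by
  constructor
  · rintro ⟨hx, -, t, ht, hxt, het⟩
    exact ⟨T.isDiagonal x hx, hxt.trans (h.subset_union_of_isTriangle ht het),
      fun hxe => h.notMem_left (hxe ▸ hx)⟩
  rintro ⟨hx, hxs, hxe'⟩
  obtain ⟨u, w, huw, -, rfl⟩ := T'.isDiagonal e' h.mem_right
  have : ∃ c ∈ ({u, w} : Finset (Fin m)), x ⊆ insert c e := by
    by_cases hux : u ∈ x
    · by_cases hwx : w ∈ x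
      · obtain ⟨p, q, hpq, -, rfl⟩ := hx
        exact absurd (eq_of_subset_of_card_le (insert_subset hux (singleton_subset_iff.2 hwx))
          (by rw [card_pair hpq, card_pair huw])).symm hxe'
      · refine ⟨u, mem_insert_self u {w}, fun y hy => ?_⟩
        have := hxs hy
        simp only [mem_union, mem_insert, mem_singleton] at this ⊢
        grind
    · refine ⟨w, by simp, fun y hy => ?_⟩
      have := hxs hy
      simp only [mem_union, mem_insert, mem_singleton] at this ⊢
      grind
  obtain ⟨c, hc, hxc⟩ := this
  exact ⟨(h.isTriangle_insert hc).mem_of_subset hx hxc, h.mem_left, _, h.isTriangle_insert hc, hxc,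
    subset_insert c e⟩

lemma neighbor_self (h : IsFlip m T T' e e') : Neighbor m T e e :=
  h.neighbor_iff.2 ⟨T.isDiagonal e h.mem_left, subset_union_left, fun he => h.notMem_left (he ▸ h.mem_left)⟩

lemma neighbor_of_ne (h : IsFlip m T T' e e') {x : Finset (Fin m)} (hx : Neighbor m T x e)
    (hxe : x ≠ e) : Neighbor m T' e' x := by
  obtain ⟨hd, hxs, -⟩ := h.neighbor_iff.1 hx
  exact (h.symm.neighbor_iff.2 ⟨hd, union_comm e e' ▸ hxs, hxe⟩).symm

lemma isTriangle_of_not_subset (h : IsFlip m T T' e e') {t : Finset (Fin m)}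
    (ht : IsTriangle m T t) (het : ¬ e ⊆ t) : IsTriangle m T' t := by
  obtain ⟨a, b, c, hab, hac, hbc, rfl, s₁, s₂, s₃⟩ := ht
  have hne : ∀ {x y : Fin m}, x ∈ ({a, b, c} : Finset (Fin m)) →
      y ∈ ({a, b, c} : Finset (Fin m)) → ({x, y} : Finset (Fin m)) ≠ e :=
    fun hx hy hxy => het (hxy ▸ insert_subset hx (singleton_subset_iff.2 hy))
  exact ⟨a, b, c, hab, hac, hbc, rfl, h.isSide_of_ne s₁ (hne (by simp) (by simp)),
    h.isSide_of_ne s₂ (hne (by simp) (by simp)), h.isSide_of_ne s₃ (hne (by simp) (by simp))⟩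

lemma neighbor_or (h : IsFlip m T T' e e') {w x : Finset (Fin m)} (hwx : Neighbor m T w x)
    (hxe : x ≠ e) : Neighbor m T' w x ∨ (Neighbor m T w e ∧ Neighbor m T' e' x) := by
  obtain ⟨hw, hx, t, ht, hwt, hxt⟩ := hwx
  by_cases het : e ⊆ t
  · exact Or.inr ⟨⟨hw, h.mem_left, t, ht, hwt, het⟩, h.neighbor_of_ne ⟨hx, h.mem_left, t, ht, hxt, het⟩ hxe⟩
  · have hsub : ∀ {y}, y ⊆ t → y ≠ e := fun hy hye => het (hye ▸ hy)
    exact Or.inl ⟨h.mem_of_ne hw (hsub hwt), h.mem_of_ne hx (hsub hxt), t,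
      h.isTriangle_of_not_subset ht het, hwt, hxt⟩

lemma exists_cross_neighbor (h : IsFlip m T T' e e') {d : Finset (Fin m)} (hd : Cross m e d)
    (hde' : d ≠ e') : ∃ q, Cross m q d ∧ Neighbor m T' e' q := by
  obtain ⟨a, b, u, w, rfl, rfl, hu, hw⟩ := h.exists_quad
  obtain ⟨x, y, rfl, hx, hy⟩ := hd.exists_of_eq rfl
  have hdisj : ∀ c ∈ ({u, w} : Finset (Fin m)), c ∉ ({a, b} : Finset (Fin m)) := by
    simp only [mem_insert, mem_singleton]
    rintro c (rfl | rfl) <;> grind [CycBtw.ne]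
  have side : ∀ p ∈ ({a, b} : Finset (Fin m)), ∀ c ∈ ({u, w} : Finset (Fin m)),
      Cross m {p, c} {x, y} → ∃ q, Cross m q {x, y} ∧ Neighbor m T' {u, w} q :=
    fun p hp c hc hcr => ⟨_, hcr, (h.symm.neighbor_iff.2 ⟨hcr.isDiagonal,
      insert_subset (mem_union_right _ hp) (singleton_subset_iff.2 (mem_union_left _ hc)),
      fun hpc => hdisj c hc (hpc ▸ mem_insert_of_mem (mem_singleton_self c))⟩).symm⟩
  rcases cross_quad_side hu hw hx hy (fun ⟨hxu, hyw⟩ => hde' (by rw [hxu, hyw])) with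
    hq | hq | hq | hq <;> exact side _ (by simp) _ (by simp) hq

end IsFlip

section FlipSeq

variable {m r : ℕ} {α : Type*} [Preorder α]

def Reaches (F : ℕ → Finset (Fin m) × Finset (Fin m)) (Ts : ℕ → Triangulation m)
    (ρ : ℕ → α) (a s : ℕ) (w : Finset (Fin m)) : Prop :=
  ∃ b < s, ρ a ≤ ρ b ∧ Neighbor m (Ts s) (F b).2 w

def Tracks (F : ℕ → Finset (Fin m) × Finset (Fin m)) (Ts : ℕ → Triangulation m)
    (ρ : ℕ → α) (a s : ℕ) (d : Finset (Fin m)) : Prop :=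
  (d ∈ (Ts s).diagonals ∧ Reaches F Ts ρ a s d) ∨
    (d ∉ (Ts s).diagonals ∧ ∃ w, Cross m w d ∧ Reaches F Ts ρ a s w)

variable {F : ℕ → Finset (Fin m) × Finset (Fin m)} {Ts : ℕ → Triangulation m} {ρ : ℕ → α}

lemma Reaches.mem {a s : ℕ} {w : Finset (Fin m)} (h : Reaches F Ts ρ a s w) :
    w ∈ (Ts s).diagonals :=
  let ⟨_, _, _, hb⟩ := h
  hb.2.1

lemma reaches_created (hseq : IsFlipSeq m r F Ts) {a s : ℕ} (hs : s < r) (h : ρ a ≤ ρ s) :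
    Reaches F Ts ρ a (s + 1) (F s).2 :=
  ⟨s, s.lt_succ_self, h, (hseq s hs).symm.neighbor_self⟩

lemma Reaches.lt_of_removed (hρ : ∀ a b, Arc m r F Ts a b → ρ a < ρ b) {a s : ℕ}
    {w : Finset (Fin m)} (h : Reaches F Ts ρ a s w) (hs : s < r) (hsw : (F s).1 = w) :
    ρ a < ρ s :=
  let ⟨b, hbs, hab, hb⟩ := h
  hab.trans_lt (hρ b s ⟨hbs, hs, hsw ▸ hb⟩)

lemma Reaches.succ (hseq : IsFlipSeq m r F Ts) (hρ : ∀ a b, Arc m r F Ts a b → ρ a < ρ b)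
    {a s : ℕ} {w : Finset (Fin m)} (h : Reaches F Ts ρ a s w) (hs : s < r)
    (hsw : (F s).1 ≠ w) : Reaches F Ts ρ a (s + 1) w := by
  obtain ⟨b, hbs, hab, hb⟩ := h
  rcases (hseq s hs).neighbor_or hb (Ne.symm hsw) with hb' | ⟨hbe, he'⟩
  · exact ⟨b, Nat.lt_succ_of_lt hbs, hab, hb'⟩
  · exact ⟨s, s.lt_succ_self, (hab.trans_lt (hρ b s ⟨hbs, hs, hbe⟩)).le, he'⟩

lemma Tracks.lt_of_touches (hseq : IsFlipSeq m r F Ts)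
    (hρ : ∀ a b, Arc m r F Ts a b → ρ a < ρ b) {a s : ℕ} {d : Finset (Fin m)}
    (h : Tracks F Ts ρ a s d) (hs : s < r) (hsd : (F s).1 = d ∨ (F s).2 = d) : ρ a < ρ s := by
  have hf := hseq s hs
  rcases h with ⟨hd, hreach⟩ | ⟨hd, w, hwd, hreach⟩
  · exact hreach.lt_of_removed hρ hs (hsd.resolve_right fun h => hf.notMem_left (h ▸ hd))
  · have hcreated : (F s).2 = d := hsd.resolve_left fun h => hd (h ▸ hf.mem_left)
    exact hreach.lt_of_removed hρ hs (hf.eq_of_cross hreach.mem (hcreated ▸ hwd)).symm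

lemma Tracks.succ (hseq : IsFlipSeq m r F Ts) (hρ : ∀ a b, Arc m r F Ts a b → ρ a < ρ b)
    {a s : ℕ} {d : Finset (Fin m)} (h : Tracks F Ts ρ a s d) (hs : s < r) :
    Tracks F Ts ρ a (s + 1) d := by
  have hf := hseq s hs
  have not_mem : d ∉ (Ts s).diagonals → (F s).2 ≠ d → d ∉ (Ts (s + 1)).diagonals :=
    fun hd hsd hd' => hd (hf.symm.mem_of_ne hd' (Ne.symm hsd))
  rcases h with ⟨hd, hreach⟩ | ⟨hd, w, hwd, hreach⟩
  · by_cases hsd : (F s).1 = d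
    · exact Or.inr ⟨hsd ▸ hf.notMem_right, (F s).2, hsd ▸ hf.cross.symm,
        reaches_created hseq hs (hreach.lt_of_removed hρ hs hsd).le⟩
    · exact Or.inl ⟨hf.mem_of_ne hd (Ne.symm hsd), hreach.succ hseq hρ hs hsd⟩
  by_cases hsw : (F s).1 = w
  · have hlt := hreach.lt_of_removed hρ hs hsw
    by_cases hsd : (F s).2 = d
    · exact Or.inl ⟨hsd ▸ hf.mem_right, hsd ▸ reaches_created hseq hs hlt.le⟩
    · obtain ⟨q, hqd, hq⟩ := hf.exists_cross_neighbor (hsw ▸ hwd) (Ne.symm hsd)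
      exact Or.inr ⟨not_mem hd hsd, q, hqd, s, s.lt_succ_self, hlt.le, hq⟩
  · have hsd : (F s).2 ≠ d := fun hsd => hsw (hf.eq_of_cross hreach.mem (hsd ▸ hwd)).symm
    exact Or.inr ⟨not_mem hd hsd, w, hwd, hreach.succ hseq hρ hs hsw⟩

lemma Tracks.mono (hseq : IsFlipSeq m r F Ts) (hρ : ∀ a b, Arc m r F Ts a b → ρ a < ρ b)
    {a s k : ℕ} {d : Finset (Fin m)} (h : Tracks F Ts ρ a s d) (hsk : s ≤ k) (hk : k ≤ r) :
    Tracks F Ts ρ a k d := by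
  induction k, hsk using Nat.le_induction with
  | base => exact h
  | succ k _ ih => exact (ih (by omega)).succ hseq hρ (by omega)

lemma lt_of_neighbor_created (hseq : IsFlipSeq m r F Ts)
    (hρ : ∀ a b, Arc m r F Ts a b → ρ a < ρ b) {i j : ℕ} (hji : j < i) (hi : i < r)
    (h : Neighbor m (Ts j) (F i).2 (F j).1) : ρ j < ρ i := by
  have hf := hseq j (hji.trans hi)
  have start : Tracks F Ts ρ j (j + 1) (F i).2 := by
    by_cases hx : (F i).2 = (F j).1
    · exact Or.inr ⟨hx ▸ hf.notMem_right, (F j).2, hx ▸ hf.cross.symm,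
        reaches_created hseq (hji.trans hi) le_rfl⟩
    · exact Or.inl ⟨hf.mem_of_ne h.1 hx, j, j.lt_succ_self, le_rfl, hf.neighbor_of_ne h hx⟩
  exact (start.mono hseq hρ hji hi.le).lt_of_touches hseq hρ hi (Or.inr rfl)

end FlipSeq

theorem topological_sort_same_dag_general (m : ℕ)
    (r : ℕ) (F : ℕ → Finset (Fin m) × Finset (Fin m)) (Ts : ℕ → Triangulation m)
    (hseq : IsFlipSeq m r F Ts)
    (σ : Equiv.Perm (Fin r))
    (htopo : ∀ p q : Fin r, Arc m r F Ts (σ p).val (σ q).val → p < q)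
    (G : ℕ → Finset (Fin m) × Finset (Fin m))
    (hG : ∀ p : Fin r, G p.val = F (σ p).val)
    (Ts' : ℕ → Triangulation m)
    (hseq' : IsFlipSeq m r G Ts') :
    ∀ p q : Fin r, Arc m r G Ts' p.val q.val ↔ Arc m r F Ts (σ p).val (σ q).val := by
  intro p q
  let ρ : ℕ → ℕ := fun a => if h : a < r then σ.symm ⟨a, h⟩ else 0
  have hρσ : ∀ x : Fin r, ρ (σ x) = x := fun x => by simp [ρ]
  have hρ : ∀ a b, Arc m r F Ts a b → ρ a < ρ b := by
    intro a b hab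
    have hb := hab.2.1
    have ha := hab.1.trans hb
    simpa [ρ, ha, hb] using htopo (σ.symm ⟨a, ha⟩) (σ.symm ⟨b, hb⟩) (by simpa using hab)
  have hflip : IsFlip m (Ts' q) (Ts' (q + 1)) (F (σ q)).1 (F (σ q)).2 := hG q ▸ hseq' q q.isLt
  have htransfer := (hflip.neighbor_iff (x := (F (σ p)).2)).trans
    (hseq (σ q) (σ q).isLt).neighbor_iff.symm
  rw [Arc, Arc, hG p, hG q, htransfer]
  constructor
  · rintro ⟨hpq, -, hnb⟩
    refine ⟨?_, (σ q).isLt, hnb⟩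
    rcases lt_trichotomy (σ p : ℕ) (σ q) with hlt | heq | hgt
    · exact hlt
    · exact absurd (congrArg Fin.val (σ.injective (Fin.ext heq))) hpq.ne
    · have hqp := lt_of_neighbor_created hseq hρ hgt (σ p).isLt hnb
      rw [hρσ, hρσ] at hqp
      omega
  · intro harc
    exact ⟨htopo p q harc, q.isLt, harc.2.2⟩

/-- Let `F` be a flip sequence of length `r` transforming `Ts 0` into `Ts r`,
and let `π(F)` be a permutation of the flips of `F` that is a topological sort
of the DAG `D_F` (the permuted sequence `G` places at position `p` the flip
`F (σ p)`), so that `π(F)` is itself a valid flip sequence, with triangulation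
sequence `Ts'`, transforming `Ts 0` into `Ts r`. Then the DAG `D_{π(F)}`,
defined from the sequence `G = π(F)`, is equal (as a directed graph on the
same set of flips) to `D_F`: there is an arc from the flip at position `p` to
the flip at position `q` in `D_{π(F)}` if and only if `D_F` has an arc from
flip `σ p` to flip `σ q`. -/
theorem topological_sort_same_dag (m : ℕ) (hm : 3 ≤ m)
    (r : ℕ) (F : ℕ → Finset (Fin m) × Finset (Fin m)) (Ts : ℕ → Triangulation m)
    (hseq : IsFlipSeq m r F Ts)
    (σ : Equiv.Perm (Fin r))
    (htopo : ∀ p q : Fin r, Arc m r F Ts (σ p).val (σ q).val → p < q)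
    (G : ℕ → Finset (Fin m) × Finset (Fin m))
    (hG : ∀ p : Fin r, G p.val = F (σ p).val)
    (Ts' : ℕ → Triangulation m)
    (hseq' : IsFlipSeq m r G Ts') (h0 : Ts' 0 = Ts 0) (hr : Ts' r = Ts r) :
    ∀ p q : Fin r, Arc m r G Ts' p.val q.val ↔ Arc m r F Ts (σ p).val (σ q).val :=
  topological_sort_same_dag_general m r F Ts hseq σ htopo G hG Ts' hseq'
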